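/- Let α ∈ [0,1). Then sup_{ρ ≥ 0} ρ·Ψ_α(ρ) = c_α, where c_α = 2/(27(1−α)) if 0 ≤ α ≤ 1/3 and c_α = √α/(3√3) if 1/3 ≤ α < 1. -/

import Mathlib

/-- The function `Ψ_α` from the scalar minimization lemma. -/
noncomputable def Psi (α ρ : ℝ) : ℝ :=
  if α = 0 then (max (1 - ρ) 0) ^ 2 / 2
  else if ρ ≤ α then 1 / 2 - ρ ^ 2 / (2 * α)
  else if ρ ≤ 1 then (1 - ρ) ^ 2 / (2 * (1 - α))
  else 0

/-- The optimized constant `c_α`. -/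
noncomputable def cAlpha (α : ℝ) : ℝ :=
  if α ≤ 1 / 3 then 2 / (27 * (1 - α)) else Real.sqrt α / (3 * Real.sqrt 3)

/-
Both pieces of `Ψ_α` are tangent at `ρ = α`, the inner one concave and the outer one convex, so
`Ψ_α(ρ) ≤ (1 - ρ)² / (2(1 - α))` for `ρ ≥ 0`; since `ρ(1 - ρ)² ≤ 4/27` on `[0, 1]`, this gives
`ρ Ψ_α(ρ) ≤ 2/(27(1 - α))`, attained at `ρ = 1/3` when `α ≤ 1/3`. When `α > 1/3`, the factor
`ρ(1 - ρ)²` decreases on `[α, 1]`, so the maximum lies in `[0, α]`, where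
`ρ Ψ_α(ρ) = ρ(α - ρ²)/(2α)` peaks at `ρ = √(α/3)` with value `√(α/3)/3 = c_α`.
-/

lemma mul_one_sub_sq_le {ρ : ℝ} (hρ : ρ ≤ 4 / 3) : ρ * (1 - ρ) ^ 2 ≤ 4 / 27 := by
  nlinarith [mul_nonneg (sq_nonneg (1 - 3 * ρ)) (by linarith : (0 : ℝ) ≤ 4 - 3 * ρ)]

lemma antitoneOn_mul_one_sub_sq :
    AntitoneOn (fun x : ℝ => x * (1 - x) ^ 2) (Set.Icc (1 / 3) 1) := by
  rintro a ⟨ha, -⟩ b ⟨-, hb⟩ hab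
  have hfactor : 1 - 2 * (a + b) + (a ^ 2 + a * b + b ^ 2) ≤ 0 := by
    nlinarith [mul_nonneg (by linarith : (0 : ℝ) ≤ 3 * a - 1) (by linarith : (0 : ℝ) ≤ 1 - a),
      mul_nonneg (by linarith : (0 : ℝ) ≤ 3 * b - 1) (by linarith : (0 : ℝ) ≤ 1 - b),
      sq_nonneg (b - a)]
  have hdiff : b * (1 - b) ^ 2 - a * (1 - a) ^ 2 =
      (b - a) * (1 - 2 * (a + b) + (a ^ 2 + a * b + b ^ 2)) := by
    ring
  nlinarith [mul_nonpos_of_nonneg_of_nonpos (sub_nonneg.2 hab) hfactor]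

lemma mul_three_mul_sq_sub_sq_le {s ρ : ℝ} (hs : 0 ≤ s) (hρ : 0 ≤ ρ) :
    ρ * (3 * s ^ 2 - ρ ^ 2) ≤ 2 * s ^ 3 := by
  nlinarith [mul_nonneg (sq_nonneg (ρ - s)) (by positivity : (0 : ℝ) ≤ ρ + 2 * s)]

section Psi

variable {α ρ : ℝ}

lemma Psi_of_le (hα : 0 < α) (hρ : ρ ≤ α) : Psi α ρ = 1 / 2 - ρ ^ 2 / (2 * α) := by
  rw [Psi, if_neg hα.ne', if_pos hρ]

lemma Psi_of_le_of_le_one (h0 : 0 ≤ α) (h1 : α < 1) (hαρ : α ≤ ρ) (hρ : ρ ≤ 1) :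
    Psi α ρ = (1 - ρ) ^ 2 / (2 * (1 - α)) := by
  rcases h0.eq_or_lt with rfl | hα
  · simp [Psi, hρ]
  rcases hαρ.eq_or_lt with rfl | hαρ
  · rw [Psi_of_le hα le_rfl]
    field_simp [(by linarith : (1 : ℝ) - α ≠ 0)]
  · rw [Psi, if_neg hα.ne', if_neg hαρ.not_ge, if_pos hρ]

lemma Psi_of_one_le (h1 : α < 1) (hρ : 1 ≤ ρ) : Psi α ρ = 0 := by
  unfold Psi
  split_ifs with hα hρα hρ1
  · simp [max_eq_right (by linarith : 1 - ρ ≤ 0)]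
  · linarith
  · simp [le_antisymm hρ1 hρ]
  · rfl

lemma Psi_le (h0 : 0 ≤ α) (h1 : α < 1) (hρ : 0 ≤ ρ) :
    Psi α ρ ≤ (1 - ρ) ^ 2 / (2 * (1 - α)) := by
  have h1' : 0 < 1 - α := by linarith
  rcases le_or_gt 1 ρ with hρ1 | hρ1
  · rw [Psi_of_one_le h1 hρ1]
    positivity
  rcases le_or_gt α ρ with hαρ | hρα
  · exact (Psi_of_le_of_le_one h0 h1 hαρ hρ1.le).le
  have hα : 0 < α := hρ.trans_lt hρα
  have key : (1 - ρ) ^ 2 / (2 * (1 - α)) - (1 / 2 - ρ ^ 2 / (2 * α)) =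
      (ρ - α) ^ 2 / (2 * α * (1 - α)) := by
    field_simp
    ring
  rw [Psi_of_le hα hρα.le, ← sub_nonneg, key]
  positivity

lemma mul_Psi_le_of_le (hα : 0 < α) (hρ0 : 0 ≤ ρ) (hρ : ρ ≤ α) :
    ρ * Psi α ρ ≤ √(α / 3) / 3 := by
  set s := √(α / 3)
  have hs : 0 < s := Real.sqrt_pos.2 (by positivity)
  have hα_eq : α = 3 * s ^ 2 := by rw [Real.sq_sqrt (by positivity)]; ring
  calc ρ * Psi α ρ = ρ * (3 * s ^ 2 - ρ ^ 2) / (2 * α) := by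
        rw [Psi_of_le hα hρ, ← hα_eq]
        field_simp
    _ ≤ 2 * s ^ 3 / (2 * α) := by gcongr ?_ / _; exact mul_three_mul_sq_sub_sq_le hs.le hρ0
    _ = s / 3 := by
        rw [hα_eq]
        field_simp

lemma mul_Psi_le_two_div (h0 : 0 ≤ α) (h1 : α < 1) (hρ : 0 ≤ ρ) :
    ρ * Psi α ρ ≤ 2 / (27 * (1 - α)) := by
  have h1' : 0 < 1 - α := by linarith
  rcases le_or_gt 1 ρ with hρ1 | hρ1
  · rw [Psi_of_one_le h1 hρ1, mul_zero]
    positivity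
  calc ρ * Psi α ρ ≤ ρ * ((1 - ρ) ^ 2 / (2 * (1 - α))) := by gcongr; exact Psi_le h0 h1 hρ
    _ = ρ * (1 - ρ) ^ 2 / (2 * (1 - α)) := by ring
    _ ≤ 4 / 27 / (2 * (1 - α)) := by gcongr; exact mul_one_sub_sq_le (by linarith)
    _ = 2 / (27 * (1 - α)) := by field_simp; ring

lemma mul_Psi_le_sqrt (h13 : 1 / 3 ≤ α) (h1 : α < 1) (hρ : 0 ≤ ρ) :
    ρ * Psi α ρ ≤ √(α / 3) / 3 := by
  have hα : 0 < α := by linarith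
  rcases le_or_gt ρ α with hρα | hαρ
  · exact mul_Psi_le_of_le hα hρ hρα
  rcases le_or_gt 1 ρ with hρ1 | hρ1
  · rw [Psi_of_one_le h1 hρ1, mul_zero]
    positivity
  have h1' : 0 < 1 - α := by linarith
  calc ρ * Psi α ρ = ρ * (1 - ρ) ^ 2 / (2 * (1 - α)) := by
        rw [Psi_of_le_of_le_one hα.le h1 hαρ.le hρ1.le]
        ring
    _ ≤ α * (1 - α) ^ 2 / (2 * (1 - α)) := by
        gcongr ?_ / _
        exact antitoneOn_mul_one_sub_sq ⟨h13, h1.le⟩ ⟨by linarith, hρ1.le⟩ hαρ.le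
    _ = α * Psi α α := by
        rw [Psi_of_le_of_le_one hα.le h1 le_rfl h1.le]
        ring
    _ ≤ √(α / 3) / 3 := mul_Psi_le_of_le hα hα.le le_rfl

end Psi

lemma cAlpha_of_one_third_lt {α : ℝ} (h : 1 / 3 < α) : cAlpha α = √(α / 3) / 3 := by
  rw [cAlpha, if_neg h.not_ge, Real.sqrt_div (by linarith)]
  ring

lemma mul_Psi_le_cAlpha {α ρ : ℝ} (h0 : 0 ≤ α) (h1 : α < 1) (hρ : 0 ≤ ρ) :
    ρ * Psi α ρ ≤ cAlpha α := by
  by_cases h13 : α ≤ 1 / 3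
  · rw [cAlpha, if_pos h13]
    exact mul_Psi_le_two_div h0 h1 hρ
  · replace h13 := not_le.1 h13
    rw [cAlpha_of_one_third_lt h13]
    exact mul_Psi_le_sqrt h13.le h1 hρ

lemma exists_mul_Psi_eq_cAlpha {α : ℝ} (h0 : 0 ≤ α) (h1 : α < 1) :
    ∃ ρ, 0 ≤ ρ ∧ cAlpha α = ρ * Psi α ρ := by
  by_cases h13 : α ≤ 1 / 3
  · refine ⟨1 / 3, by norm_num, ?_⟩
    rw [cAlpha, if_pos h13, Psi_of_le_of_le_one h0 h1 h13 (by norm_num)]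
    field_simp [(by linarith : (1 : ℝ) - α ≠ 0)]
    ring
  · replace h13 := not_le.1 h13
    have hα : 0 < α := by linarith
    have hsα : √(α / 3) ≤ α := (Real.sqrt_le_left hα.le).2 (by nlinarith)
    refine ⟨√(α / 3), Real.sqrt_nonneg _, ?_⟩
    rw [cAlpha_of_one_third_lt h13, Psi_of_le hα hsα, Real.sq_sqrt (by positivity)]
    field_simp
    ring

theorem sup_rho_psi (α : ℝ) (hα : α ∈ Set.Ico (0 : ℝ) 1) :
    sSup {y : ℝ | ∃ ρ : ℝ, 0 ≤ ρ ∧ y = ρ * Psi α ρ} = cAlpha α := by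
  obtain ⟨h0, h1⟩ := hα
  refine IsGreatest.csSup_eq ⟨exists_mul_Psi_eq_cAlpha h0 h1, ?_⟩
  rintro y ⟨ρ, hρ, rfl⟩
  exact mul_Psi_le_cAlpha h0 h1 hρ
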